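/- Every holomorphic automorphism of the trivial principal C*-bundle over the punctured disc D* which extends to a C*-equivariant automorphism of the local model (M₀, π₀) over D is given by multiplication by g(z) = e^{f(z)} z^k for some holomorphic f on D and k ∈ Z; that is, the sheaf of C*-equivariant automorphisms of (M₀,π₀) over (C,{0}) is O^×(*{0}). -/

import Mathlib

/-!
Put `h z = z ^ (-k) * g z`. On the diagonal `y = x` the two components of `Φ` read
`x * h (x * x)` and `x * (h (x * x))⁻¹`, so `h (x * x)` and its inverse are difference quotients
at `0` of holomorphic functions vanishing there, and both converge as `x → 0`. Squaring is open
at `0`, so `h` itself has a nonzero limit at `0`; by Riemann's removable singularity theorem it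
extends to a nowhere vanishing entire function, which has an entire logarithm (a primitive of
its logarithmic derivative).
-/

open Complex Filter Topology Set Function

theorem Complex.exists_differentiable_exp_eq {H : ℂ → ℂ} (hH : Differentiable ℂ H)
    (hH0 : ∀ z, H z ≠ 0) : ∃ f : ℂ → ℂ, Differentiable ℂ f ∧ ∀ z, H z = exp (f z) := by
  obtain ⟨f, hf0, hf⟩ := (hH.deriv.div hH hH0).isExactOn_univ.with_val_at 0 (log (H 0))
  replace hf : ∀ z, HasDerivAt f (deriv H z / H z) z := fun z => hf z (mem_univ z)
  refine ⟨f, fun z => (hf z).differentiableAt, fun z => ?_⟩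
  have hquot : ∀ w, HasDerivAt (fun w => H w * exp (-f w)) 0 w := fun w =>
    ((hH w).hasDerivAt.mul (hf w).neg.cexp).congr_deriv (by field_simp [hH0 w]; ring)
  have hconst := is_const_of_deriv_eq_zero (fun w => (hquot w).differentiableAt)
    (fun w => (hquot w).deriv) z 0
  simp only [hf0, exp_neg, exp_log (hH0 0), mul_inv_cancel₀ (hH0 0)] at hconst
  exact (mul_inv_eq_one₀ (exp_ne_zero _)).mp hconst

theorem tendsto_nhdsNE_of_hasDerivAt_of_eq_mul {𝕜 : Type*} [NontriviallyNormedField 𝕜]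
    {F φ : 𝕜 → 𝕜} {F' : 𝕜} (hF : HasDerivAt F F' 0) (hF0 : F 0 = 0)
    (hφ : ∀ x ≠ 0, F x = x * φ x) : Tendsto φ (𝓝[≠] 0) (𝓝 F') :=
  (hasDerivAt_iff_tendsto_slope.mp hF).congr' <| eventually_nhdsWithin_of_forall fun x hx => by
    rw [slope_def_field, hF0, hφ x hx, sub_zero, sub_zero, mul_div_cancel_left₀ _ hx]

theorem Complex.nhdsNE_zero_le_map_mul_self :
    𝓝[≠] (0 : ℂ) ≤ map (fun x => x * x) (𝓝[≠] 0) := by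
  have hopen : 𝓝 (0 : ℂ) ≤ map (fun x => x * x) (𝓝 0) := by
    have hsq : AnalyticAt ℂ (fun x : ℂ => x * x) 0 := by fun_prop
    have hcases := hsq.eventually_constant_or_nhds_le_map_nhds
    rw [mul_zero] at hcases
    refine hcases.resolve_left fun hconst => ?_
    obtain ⟨x, hx, hx0⟩ := ((hconst.filter_mono nhdsWithin_le_nhds).and
      self_mem_nhdsWithin).exists (f := 𝓝[≠] (0 : ℂ))
    simp_all
  have hpre : (fun x : ℂ => x * x) ⁻¹' {0}ᶜ = {0}ᶜ := by ext; simp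
  calc 𝓝[≠] (0 : ℂ) ≤ map (fun x => x * x) (𝓝 0) ⊓ 𝓟 {0}ᶜ := inf_le_inf_right _ hopen
    _ = map (fun x => x * x) (𝓝[≠] 0) := by rw [← map_inf_principal_preimage, hpre]; rfl

theorem Complex.tendsto_nhdsNE_zero_of_tendsto_comp_mul_self {α : Type*} {h : ℂ → α}
    {l : Filter α} (hh : Tendsto (fun x => h (x * x)) (𝓝[≠] 0) l) : Tendsto h (𝓝[≠] 0) l :=
  (tendsto_map'_iff.mpr hh).mono_left nhdsNE_zero_le_map_mul_self

theorem Complex.tendsto_nhdsNE_zero_of_eq_mul_comp_mul_self {P φ : ℂ → ℂ}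
    (hP : DifferentiableAt ℂ P 0) (hP0 : P 0 = 0) (hφ : ∀ x ≠ 0, P x = x * φ (x * x)) :
    Tendsto φ (𝓝[≠] 0) (𝓝 (deriv P 0)) :=
  tendsto_nhdsNE_zero_of_tendsto_comp_mul_self <|
    tendsto_nhdsNE_of_hasDerivAt_of_eq_mul hP.hasDerivAt hP0 hφ

theorem Complex.differentiable_update_of_tendsto {E : Type*} [NormedAddCommGroup E]
    [NormedSpace ℂ E] [CompleteSpace E] {h : ℂ → E} {a : E} (hd : DifferentiableOn ℂ h {0}ᶜ)
    (hlim : Tendsto h (𝓝[≠] 0) (𝓝 a)) : Differentiable ℂ (update h 0 a) := by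
  rw [← differentiableOn_univ, ← differentiableOn_compl_singleton_and_continuousAt_iff
    (c := 0) univ_mem, ← compl_eq_univ_sdiff, continuousAt_update_same]
  exact ⟨hd.congr fun z hz => update_of_ne hz _ _, hlim⟩

theorem ne_zero_of_tendsto_of_tendsto_inv {α 𝕜 : Type*} [NormedField 𝕜] {l : Filter α} [l.NeBot]
    {φ : α → 𝕜} {a b : 𝕜} (hφ : Tendsto φ l (𝓝 a)) (hinv : Tendsto (fun x => (φ x)⁻¹) l (𝓝 b))
    (hne : ∀ᶠ x in l, φ x ≠ 0) : a ≠ 0 := by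
  have hab : a * b = 1 :=
    tendsto_nhds_unique ((hφ.mul hinv).congr' (hne.mono fun x hx => mul_inv_cancel₀ hx))
      tendsto_const_nhds
  exact left_ne_zero_of_mul_eq_one hab

theorem equivariant_automorphisms_are_meromorphic_general
    (g : ℂ → ℂ)
    (hg : DifferentiableOn ℂ g {z : ℂ | z ≠ 0})
    (hg0 : ∀ z : ℂ, z ≠ 0 → g z ≠ 0)
    (k : ℤ) (Φ : ℂ × ℂ → ℂ × ℂ)
    (hΦa : AnalyticAt ℂ Φ 0)
    (hΦ0 : Φ 0 = 0)
    (hΦeq : ∀ x y : ℂ, x * y ≠ 0 →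
      Φ (x, y) = ((x * y) ^ (-k) * g (x * y) * x,
                  (x * y) ^ k * (g (x * y))⁻¹ * y)) :
    ∃ f : ℂ → ℂ, Differentiable ℂ f ∧
      ∀ z : ℂ, z ≠ 0 → g z = Complex.exp (f z) * z ^ k := by
  set h : ℂ → ℂ := fun z => z ^ (-k) * g z
  have hdiag : DifferentiableAt ℂ (fun x : ℂ => Φ (x, x)) 0 :=
    DifferentiableAt.comp (𝕜 := ℂ) 0 (hΦa.differentiableAt : DifferentiableAt ℂ Φ (0, 0))
      (differentiableAt_id.prodMk differentiableAt_id)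
  have hlim : Tendsto h (𝓝[≠] 0) (𝓝 (deriv (fun x : ℂ => (Φ (x, x)).1) 0)) :=
    tendsto_nhdsNE_zero_of_eq_mul_comp_mul_self hdiag.fst (by simp [Prod.mk_zero_zero, hΦ0])
      fun x hx => by simp only [hΦeq x x (mul_ne_zero hx hx), h]; ring
  have hlim_inv : Tendsto (fun z => (h z)⁻¹) (𝓝[≠] 0)
      (𝓝 (deriv (fun x : ℂ => (Φ (x, x)).2) 0)) :=
    tendsto_nhdsNE_zero_of_eq_mul_comp_mul_self hdiag.snd (by simp [Prod.mk_zero_zero, hΦ0])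
      fun x hx => by simp only [hΦeq x x (mul_ne_zero hx hx), h, mul_inv, zpow_neg, inv_inv]; ring
  have hh0 : ∀ z ≠ 0, h z ≠ 0 := fun z hz => mul_ne_zero (zpow_ne_zero _ hz) (hg0 z hz)
  have hlim_ne := ne_zero_of_tendsto_of_tendsto_inv hlim hlim_inv
    (eventually_nhdsWithin_of_forall hh0)
  have hd : DifferentiableOn ℂ h {0}ᶜ := fun z hz =>
    ((differentiableAt_zpow.mpr (Or.inl hz)).mul
      (hg.differentiableAt (isOpen_ne.mem_nhds hz))).differentiableWithinAt
  obtain ⟨f, hf, hexp⟩ := exists_differentiable_exp_eq (differentiable_update_of_tendsto hd hlim)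
    fun z => by
      rcases eq_or_ne z 0 with rfl | hz
      · simpa using hlim_ne
      · simpa [update_of_ne hz] using hh0 z hz
  refine ⟨f, hf, fun z hz => ?_⟩
  rw [← hexp z, update_of_ne hz, mul_comm, ← mul_assoc, zpow_neg, mul_inv_cancel₀
    (zpow_ne_zero _ hz), one_mul]

/-- every holomorphic automorphism of the trivial principal
`ℂ^*`-bundle over the punctured disc, given away from the zero fibre by
`(x, y) ↦ (g(z)x, g(z)⁻¹y)` with `z = xy` and `g` holomorphic and nonvanishing
on the punctured plane, which extends to a `ℂ^*`-equivariant automorphism of the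
local model `(M₀, π₀)` — i.e. which, read in the chart around the fixed point of
chart `0` and the fixed point of chart `k` (the chart change multiplying the
`x`-coordinate by `z^{-k}` and the `y`-coordinate by `z^k`), extends to a
holomorphic germ `Φ` at the origin with `Φ(0) = 0` and invertible Jacobian —
is given by multiplication by `g(z) = e^{f(z)} z^k` for some holomorphic `f`;
that is, the sheaf of `ℂ^*`-equivariant automorphisms of `(M₀, π₀)` over
`(ℂ, {0})` is `O^×(*{0})`. -/
theorem equivariant_automorphisms_are_meromorphic
    (g : ℂ → ℂ)
    (hg : DifferentiableOn ℂ g {z : ℂ | z ≠ 0})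
    (hg0 : ∀ z : ℂ, z ≠ 0 → g z ≠ 0)
    (k : ℤ) (Φ : ℂ × ℂ → ℂ × ℂ)
    (hΦa : AnalyticAt ℂ Φ 0)
    (hΦ0 : Φ 0 = 0)
    (hΦjac : Function.Bijective (fderiv ℂ Φ 0))
    (hΦeq : ∀ x y : ℂ, x * y ≠ 0 →
      Φ (x, y) = ((x * y) ^ (-k) * g (x * y) * x,
                  (x * y) ^ k * (g (x * y))⁻¹ * y)) :
    ∃ f : ℂ → ℂ, Differentiable ℂ f ∧
      ∀ z : ℂ, z ≠ 0 → g z = Complex.exp (f z) * z ^ k :=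
  equivariant_automorphisms_are_meromorphic_general g hg hg0 k Φ hΦa hΦ0 hΦeq
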